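/- arXiv:1301.1054 — 9 statements merged into one kernel-verified Lean document; each statement's English description precedes it below -/
import Mathlib

section
/- The numerical range of a bounded self-adjoint operator on a complex Hilbert space is a convex subset of ℝ (an interval): for any two unit vectors f, g, every real number between ⟨Af,f⟩ and ⟨Ag,g⟩ is attained as ⟨Ah,h⟩ for some unit vector h. -/
/-!
A nonzero complex normed space has real dimension at least two, so its unit sphere is
connected, and `h ↦ re ⟪A h, h⟫` is continuous on it. Its image is therefore a connected subset
of `ℝ`, i.e. an interval.
-/

open Metric

theorem one_lt_rank_real_of_complex (E : Type*) [AddCommGroup E] [Module ℂ E] [Nontrivial E] :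
    1 < Module.rank ℝ E := by
  have h := lift_rank_mul_lift_rank ℝ ℂ E
  simp only [Complex.rank_real_complex, Cardinal.lift_ofNat, Cardinal.lift_uzero] at h
  have hpos : 1 ≤ Module.rank ℂ E := Cardinal.one_le_iff_ne_zero.mpr rank_pos.ne'
  calc (1 : Cardinal) < 2 * 1 := by rw [mul_one]; exact Cardinal.one_lt_two
    _ ≤ 2 * Module.rank ℂ E := by gcongr
    _ = Module.rank ℝ E := h

theorem isPreconnected_sphere_of_complex {E : Type*} [NormedAddCommGroup E] [NormedSpace ℂ E]
    (x : E) (r : ℝ) : IsPreconnected (sphere x r) := by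
  rcases subsingleton_or_nontrivial E with _ | _
  · exact Set.subsingleton_of_subsingleton.isPreconnected
  · exact isPreconnected_sphere (one_lt_rank_real_of_complex E) x r

theorem numerical_range_convex_general {H : Type*} [NormedAddCommGroup H] [InnerProductSpace ℂ H]
    (A : H →L[ℂ] H) :
    ∀ f g : H, ‖f‖ = 1 → ‖g‖ = 1 → ∀ t : ℝ,
      t ∈ Set.uIcc ((inner ℂ (A f) f : ℂ).re) ((inner ℂ (A g) g : ℂ).re) →
      ∃ h : H, ‖h‖ = 1 ∧ ((inner ℂ (A h) h : ℂ)).re = t := by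
  intro f g hf hg t ht
  set q : H → ℝ := fun h => (inner ℂ (A h) h : ℂ).re
  have hq : Continuous q := by fun_prop
  have hrange : (q '' sphere 0 1).OrdConnected :=
    ((isPreconnected_sphere_of_complex 0 1).image q hq.continuousOn).ordConnected
  obtain ⟨h, hh, rfl⟩ := hrange.uIcc_subset ⟨f, by simpa using hf, rfl⟩
    ⟨g, by simpa using hg, rfl⟩ ht
  exact ⟨h, by simpa using hh, rfl⟩

/-- The numerical range of a bounded self-adjoint operator is an interval: any
real number between the values at two unit vectors is attained at a unit vector. -/
theorem numerical_range_convex {H : Type*} [NormedAddCommGroup H] [InnerProductSpace ℂ H]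
    [CompleteSpace H] (A : H →L[ℂ] H)
    (hA : ∀ f g : H, (inner ℂ (A f) g : ℂ) = inner ℂ f (A g)) :
    ∀ f g : H, ‖f‖ = 1 → ‖g‖ = 1 → ∀ t : ℝ,
      t ∈ Set.uIcc ((inner ℂ (A f) f : ℂ).re) ((inner ℂ (A g) g : ℂ).re) →
      ∃ h : H, ‖h‖ = 1 ∧ ((inner ℂ (A h) h : ℂ)).re = t :=
  numerical_range_convex_general A
end

section
/- Hoffman's bound for the chromatic number of a symmetric matrix: if B is a nonzero real symmetric n×n matrix with smallest eigenvalue m(B) and largest eigenvalue M(B), and the vertex set {1,...,n} can be partitioned into k sets C₁,...,Cₖ such that fᵀ B f = 0 for every vector f supported on a single Cᵢ, then k ≥ (M(B) − m(B))/(−m(B)). -/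
/-!
Let `g` be a unit eigenvector for the top eigenvalue `M` and `g = ∑ⱼ gⱼ` its restrictions to the
`k` independent sets. Summing the Rayleigh bound `m ‖x‖² ≤ xᵀ B x` over the `k` vectors
`x = g - k gⱼ` gives `m (k² - k) ≤ -k M`: on the right the diagonal terms `gⱼᵀ B gⱼ` vanish
by independence, and on the left `∑ ‖gⱼ‖² = ‖g‖² = 1` because the supports are disjoint.
-/

open Matrix
open scoped MatrixOrder

lemma Finset.sum_indicator_eq_of_existsUnique {ι κ R : Type*} [Fintype κ] [AddCommMonoid R]
    {C : κ → Set ι} (hC : ∀ v, ∃! j, v ∈ C j) (g : ι → R) : ∑ j, (C j).indicator g = g := by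
  funext v
  obtain ⟨j, hj, huniq⟩ := hC v
  rw [Finset.sum_apply, Finset.sum_eq_single j (fun i _ hij ↦
      Set.indicator_of_notMem (fun hi ↦ hij (huniq i hi)) g) (by simp),
    Set.indicator_of_mem hj]

namespace Matrix

variable {ι κ : Type*} [Fintype ι] [Fintype κ]

def IsIndependentSet (A : Matrix ι ι ℝ) (C : Set ι) : Prop :=
  ∀ f : ι → ℝ, (∀ v, v ∉ C → f v = 0) → f ⬝ᵥ (A *ᵥ f) = 0

lemma indicator_dotProduct_indicator (C : Set ι) (g : ι → ℝ) :
    C.indicator g ⬝ᵥ C.indicator g = g ⬝ᵥ C.indicator g := by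
  refine Finset.sum_congr rfl fun v _ ↦ ?_
  by_cases hv : v ∈ C <;> simp [hv]

namespace IsHermitian

variable {A : Matrix ι ι ℝ}

lemma dotProduct_mulVec_comm (hA : A.IsHermitian) (x y : ι → ℝ) :
    x ⬝ᵥ (A *ᵥ y) = y ⬝ᵥ (A *ᵥ x) := by
  rw [dotProduct_mulVec, ← mulVec_transpose, dotProduct_comm,
    ← conjTranspose_eq_transpose_of_trivial, hA]

lemma dotProduct_mulVec_sub_smul (hA : A.IsHermitian) (x y : ι → ℝ) (c : ℝ) :
    (x - c • y) ⬝ᵥ (A *ᵥ (x - c • y)) =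
      x ⬝ᵥ (A *ᵥ x) - 2 * c * (x ⬝ᵥ (A *ᵥ y)) + c ^ 2 * (y ⬝ᵥ (A *ᵥ y)) := by
  rw [mulVec_sub, mulVec_smul, sub_dotProduct, dotProduct_sub, dotProduct_sub, smul_dotProduct,
    smul_dotProduct, dotProduct_smul, dotProduct_smul, hA.dotProduct_mulVec_comm y x, smul_eq_mul,
    smul_eq_mul, smul_eq_mul]
  ring

lemma sum_dotProduct_mulVec_sub_card_smul (hA : A.IsHermitian) {x : ι → ℝ} (y : κ → ι → ℝ)
    (hy : ∑ j, y j = x) :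
    ∑ j, (x - (Fintype.card κ : ℝ) • y j) ⬝ᵥ (A *ᵥ (x - (Fintype.card κ : ℝ) • y j)) =
      (Fintype.card κ : ℝ) ^ 2 * ∑ j, y j ⬝ᵥ (A *ᵥ y j) -
        Fintype.card κ * (x ⬝ᵥ (A *ᵥ x)) := by
  have hcross : ∑ j, x ⬝ᵥ (A *ᵥ y j) = x ⬝ᵥ (A *ᵥ x) := by
    rw [← dotProduct_sum, ← mulVec_sum, hy]
  simp only [hA.dotProduct_mulVec_sub_smul, Finset.sum_add_distrib, Finset.sum_sub_distrib,
    ← Finset.mul_sum, hcross, Finset.sum_const, Finset.card_univ, nsmul_eq_mul]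
  ring

variable [DecidableEq ι]

lemma mul_dotProduct_self_le (hA : A.IsHermitian) {m : ℝ} (hm : ∀ i, m ≤ hA.eigenvalues i)
    (x : ι → ℝ) : m * (x ⬝ᵥ x) ≤ x ⬝ᵥ (A *ᵥ x) := by
  have hle : algebraMap ℝ (Matrix ι ι ℝ) m ≤ A := by
    rw [algebraMap_le_iff_le_spectrum hA.isSelfAdjoint, hA.spectrum_real_eq_range_eigenvalues]
    rintro _ ⟨i, rfl⟩
    exact hm i
  have := (le_iff.mp hle).dotProduct_mulVec_nonneg x
  rwa [Algebra.algebraMap_eq_smul_one, sub_mulVec, smul_mulVec, one_mulVec, dotProduct_sub,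
    dotProduct_smul, smul_eq_mul, star_trivial, sub_nonneg] at this

lemma exists_eigenvector_dotProduct_self_eq_one (hA : A.IsHermitian) (i : ι) :
    ∃ g : ι → ℝ, A *ᵥ g = hA.eigenvalues i • g ∧ g ⬝ᵥ g = 1 := by
  refine ⟨_, hA.mulVec_eigenvectorBasis i, ?_⟩
  have hnorm := hA.eigenvectorBasis.orthonormal.1 i
  have hinner := EuclideanSpace.inner_eq_star_dotProduct (hA.eigenvectorBasis i)
    (hA.eigenvectorBasis i)
  rw [star_trivial, real_inner_self_eq_norm_sq, hnorm, one_pow] at hinner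
  exact hinner.symm

theorem sub_le_neg_mul_card_of_isIndependentSet (hA : A.IsHermitian) {m : ℝ}
    (hm : ∀ i, m ≤ hA.eigenvalues i) (i : ι) {C : κ → Set ι} (hC : ∀ v, ∃! j, v ∈ C j)
    (hind : ∀ j, A.IsIndependentSet (C j)) :
    hA.eigenvalues i - m ≤ -m * Fintype.card κ := by
  obtain ⟨g, hAg, hgg⟩ := hA.exists_eigenvector_dotProduct_self_eq_one i
  set k : ℝ := (Fintype.card κ : ℝ)
  set y : κ → ι → ℝ := fun j ↦ (C j).indicator g
  have hy : ∑ j, y j = g := Finset.sum_indicator_eq_of_existsUnique hC g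
  have hyy : ∑ j, y j ⬝ᵥ y j = 1 := by
    simp only [y, indicator_dotProduct_indicator, ← dotProduct_sum, hy, hgg]
  have hquad : ∑ j, (g - k • y j) ⬝ᵥ (A *ᵥ (g - k • y j)) = -k * hA.eigenvalues i := by
    rw [hA.sum_dotProduct_mulVec_sub_card_smul y hy,
      Finset.sum_eq_zero fun j _ ↦ hind j _ fun v hv ↦ Set.indicator_of_notMem hv g,
      hAg, dotProduct_smul, hgg, smul_eq_mul]
    ring
  have hsq : ∑ j, (g - k • y j) ⬝ᵥ (g - k • y j) = k ^ 2 - k := by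
    simpa [hyy, hgg] using isHermitian_one.sum_dotProduct_mulVec_sub_card_smul y hy
  have hk : 0 < k := by
    obtain ⟨j, -⟩ := hC i
    exact Nat.cast_pos.mpr (Fintype.card_pos_iff.mpr ⟨j⟩)
  have hsum : m * (k ^ 2 - k) ≤ -k * hA.eigenvalues i := by
    rw [← hsq, ← hquad, Finset.mul_sum]
    exact Finset.sum_le_sum fun j _ ↦ hA.mul_dotProduct_self_le hm _
  nlinarith

end IsHermitian

end Matrix

theorem hoffman_bound_matrix_general {n k : ℕ} (B : Matrix (Fin n) (Fin n) ℝ)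
    (hB : B.IsHermitian) (m M : ℝ)
    (hm : IsGLB (Set.range hB.eigenvalues) m)
    (hM : IsLUB (Set.range hB.eigenvalues) M)
    (C : Fin k → Set (Fin n)) (hpart : ∀ v, ∃! i, v ∈ C i)
    (hind : ∀ i, ∀ f : Fin n → ℝ, (∀ v, v ∉ C i → f v = 0) →
      dotProduct f (B.mulVec f) = 0) :
    (M - m) / (-m) ≤ (k : ℝ) := by
  have hne : (Set.range hB.eigenvalues).Nonempty := by
    rw [Set.nonempty_iff_ne_empty]
    rintro hempty
    rw [hempty, isGLB_empty_iff] at hm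
    exact not_isTop m hm
  obtain ⟨i, rfl⟩ := hM.mem_of_isClosed hne (Set.finite_range _).isClosed
  have hmle : ∀ j, m ≤ hB.eigenvalues j := fun j ↦ hm.1 ⟨j, rfl⟩
  have hkey := hB.sub_le_neg_mul_card_of_isIndependentSet hmle i hpart hind
  rw [Fintype.card_fin] at hkey
  rcases lt_or_ge m 0 with hneg | hnonneg
  · rw [div_le_iff₀ (neg_pos.mpr hneg)]
    linarith
  · exact (div_nonpos_of_nonneg_of_nonpos (sub_nonneg.mpr (hmle i)) (neg_nonpos.mpr hnonneg)).trans
      (Nat.cast_nonneg k)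

/-- Hoffman's bound for the chromatic number of a nonzero real symmetric matrix:
if the index set partitions into `k` independent sets for `B`, then
`k ≥ (M(B) - m(B)) / (-m(B))`. -/
theorem hoffman_bound_matrix {n k : ℕ} (B : Matrix (Fin n) (Fin n) ℝ)
    (hB : B.IsHermitian) (hB0 : B ≠ 0) (m M : ℝ)
    (hm : IsGLB (Set.range hB.eigenvalues) m)
    (hM : IsLUB (Set.range hB.eigenvalues) M)
    (C : Fin k → Set (Fin n)) (hpart : ∀ v, ∃! i, v ∈ C i)
    (hind : ∀ i, ∀ f : Fin n → ℝ, (∀ v, v ∉ C i → f v = 0) →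
      dotProduct f (B.mulVec f) = 0) :
    (M - m) / (-m) ≤ (k : ℝ) :=
  hoffman_bound_matrix_general B hB m M hm hM C hpart hind
end

section
/- Lovász's spectral bound on the independence ratio: for a finite r-regular graph G on n vertices with r ≥ 1, with adjacency matrix A having smallest eigenvalue m(A) and largest eigenvalue M(A) = r, every independent set I of G satisfies |I|/n ≤ −m(A)/(M(A) − m(A)). -/
/-!
Hoffman's ratio bound. Since `m` bounds the spectrum of `A` from below, `A - m • 1` is positive
semidefinite; evaluating its quadratic form at `n • 1_I - |I| • 1` and using `A 1 = r 1` and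
`1_Iᵀ A 1_I = 0` gives `m (n - |I|) ≤ -r |I|`, i.e. `|I| (r - m) ≤ -m n`. Finally `m ≤ 0` because
`tr A = 0`, which also covers `I = ∅`.
-/

open Matrix SimpleGraph Finset
open scoped MatrixOrder ComplexOrder

namespace Matrix

variable {n : Type*} [Fintype n] [DecidableEq n]

theorem IsHermitian.posSemidef_sub_smul_one {𝕜 : Type*} [RCLike 𝕜] {A : Matrix n n 𝕜}
    (hA : A.IsHermitian) {m : ℝ} (hm : m ∈ lowerBounds (Set.range hA.eigenvalues)) :
    (A - m • (1 : Matrix n n 𝕜)).PosSemidef := by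
  have : algebraMap ℝ (Matrix n n 𝕜) m ≤ A := by
    rw [algebraMap_le_iff_le_spectrum hA.isSelfAdjoint, hA.spectrum_real_eq_range_eigenvalues]
    exact hm
  simpa [Matrix.le_iff, Algebra.algebraMap_eq_smul_one] using this

theorem IsHermitian.mul_dotProduct_self_le_s6 {A : Matrix n n ℝ} (hA : A.IsHermitian) {m : ℝ}
    (hm : m ∈ lowerBounds (Set.range hA.eigenvalues)) (y : n → ℝ) :
    m * (y ⬝ᵥ y) ≤ y ⬝ᵥ A *ᵥ y := by
  have := (hA.posSemidef_sub_smul_one (𝕜 := ℝ) hm).dotProduct_mulVec_nonneg y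
  simp only [sub_mulVec, dotProduct_sub, smul_mulVec, one_mulVec, dotProduct_smul, star_trivial,
    smul_eq_mul] at this
  linarith

theorem IsHermitian.exists_eigenvalues_nonpos [Nonempty n] {𝕜 : Type*} [RCLike 𝕜]
    {A : Matrix n n 𝕜} (hA : A.IsHermitian) (htr : A.trace = 0) :
    ∃ i, hA.eigenvalues i ≤ 0 := by
  have hsum : ∑ i, hA.eigenvalues i = ∑ _ : n, (0 : ℝ) := by
    rw [sum_const_zero]
    exact_mod_cast hA.trace_eq_sum_eigenvalues.symm.trans htr
  obtain ⟨i, -, hi⟩ := exists_le_of_sum_le univ_nonempty hsum.le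
  exact ⟨i, hi⟩

/-- The Rayleigh bound at the centred vector `card n • x - (∑ i, x i) • 1`. -/
theorem IsHermitian.mul_card_mul_dotProduct_sub_sq_le [Nonempty n] {A : Matrix n n ℝ}
    (hA : A.IsHermitian) {m r : ℝ} (hm : m ∈ lowerBounds (Set.range hA.eigenvalues))
    (hrow : A *ᵥ 1 = r • 1) (x : n → ℝ) :
    m * (Fintype.card n * (x ⬝ᵥ x) - (∑ i, x i) ^ 2) ≤
      Fintype.card n * (x ⬝ᵥ A *ᵥ x) - r * (∑ i, x i) ^ 2 := by
  set N : ℝ := (Fintype.card n : ℝ)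
  set s := ∑ i, x i
  have hcol : 1 ᵥ* A = r • 1 := by
    rw [← mulVec_transpose, ← conjTranspose_eq_transpose_of_trivial, hA.eq, hrow]
  have h1x : 1 ⬝ᵥ x = s := one_dotProduct x
  have hx1 : x ⬝ᵥ 1 = s := dotProduct_one x
  have h11 : (1 : n → ℝ) ⬝ᵥ 1 = N := by simp [N]
  have h1Ax : 1 ⬝ᵥ A *ᵥ x = r * s := by
    rw [dotProduct_mulVec, hcol, smul_dotProduct, h1x, smul_eq_mul]
  have key := hA.mul_dotProduct_self_le_s6 hm (N • x - s • 1)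
  simp only [mulVec_sub, mulVec_smul, sub_dotProduct, dotProduct_sub, smul_dotProduct,
    dotProduct_smul, hrow, h1Ax, smul_eq_mul, h1x, hx1, h11] at key
  have hN : 0 < N := by simp [N, Fintype.card_pos]
  refine le_of_mul_le_mul_left ?_ hN
  linear_combination key

end Matrix

namespace SimpleGraph

variable {V : Type*} [Fintype V] {G : SimpleGraph V} [DecidableRel G.Adj]

theorem IsIndepSet.dotProduct_adjMatrix_mulVec_eq_zero {R : Type*} [NonAssocSemiring R]
    {s : Set V} (hs : G.IsIndepSet s) {x : V → R} (hx : ∀ v ∉ s, x v = 0) :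
    x ⬝ᵥ G.adjMatrix R *ᵥ x = 0 := by
  rw [dotProduct_mulVec_adjMatrix]
  refine sum_eq_zero fun v _ => sum_eq_zero fun w _ => ?_
  split_ifs with hvw
  · by_cases hv : v ∈ s
    · by_cases hw : w ∈ s
      · exact absurd hvw (hs hv hw hvw.ne)
      · simp [hx w hw]
    · simp [hx v hv]
  · rfl

theorem IsRegularOfDegree.card_mul_sub_le_of_isIndepSet [DecidableEq V] {r : ℕ}
    (hreg : G.IsRegularOfDegree r) (hA : (G.adjMatrix ℝ).IsHermitian) {m : ℝ}
    (hm : m ∈ lowerBounds (Set.range hA.eigenvalues)) {I : Finset V} (hI : G.IsIndepSet I)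
    (hIne : I.Nonempty) :
    (#I : ℝ) * (r - m) ≤ -m * Fintype.card V := by
  have : Nonempty V := hIne.to_type.map (↑)
  set x : V → ℝ := fun v => if v ∈ I then 1 else 0
  have hxx : x ⬝ᵥ x = #I := by simp [x, dotProduct]
  have hsum : ∑ v, x v = #I := by simp [x]
  have hrow : G.adjMatrix ℝ *ᵥ 1 = (r : ℝ) • 1 := by
    ext v
    simp [hreg v]
  have key := hA.mul_card_mul_dotProduct_sub_sq_le hm hrow x
  rw [hI.dotProduct_adjMatrix_mulVec_eq_zero (by simp [x]), hxx, hsum] at key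
  have hK : (0 : ℝ) < #I := by exact_mod_cast hIne.card_pos
  refine le_of_mul_le_mul_left ?_ hK
  linear_combination key

end SimpleGraph

/-- Lovász's spectral bound on the independence ratio of a finite `r`-regular
graph: `|I|/n ≤ -m(A) / (M(A) - m(A))` where `M(A) = r`. -/
theorem lovasz_independence_ratio_bound {V : Type*} [Fintype V] [DecidableEq V]
    (G : SimpleGraph V) [DecidableRel G.Adj] (r : ℕ) (hr : 1 ≤ r)
    (hreg : G.IsRegularOfDegree r) (hH : (G.adjMatrix ℝ).IsHermitian)
    (m : ℝ) (hm : IsGLB (Set.range hH.eigenvalues) m)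
    (I : Finset V) (hI : ∀ v ∈ I, ∀ w ∈ I, ¬ G.Adj v w) :
    (I.card : ℝ) / (Fintype.card V : ℝ) ≤ (-m) / ((r : ℝ) - m) := by
  have : Nonempty V := by
    by_contra hV
    rw [not_nonempty_iff] at hV
    simp [Set.range_eq_empty] at hm
  obtain ⟨i, hi⟩ := hH.exists_eigenvalues_nonpos (G.trace_adjMatrix ℝ)
  have hm0 : m ≤ 0 := (hm.1 ⟨i, rfl⟩).trans hi
  have hrm : 0 < (r : ℝ) - m := by
    have : (1 : ℝ) ≤ r := by exact_mod_cast hr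
    linarith
  rw [div_le_div_iff₀ (by positivity) hrm]
  rcases I.eq_empty_or_nonempty with rfl | hIne
  · simpa using mul_nonneg (neg_nonneg.2 hm0) (Nat.cast_nonneg (Fintype.card V))
  · exact hreg.card_mul_sub_le_of_isIndepSet hH hm.1 (fun v hv w hw _ => hI v hv w hw) hIne
end

section
/- Hoffman's bound for the chromatic number of a finite graph: if G is a finite graph with at least one edge, adjacency matrix A, smallest eigenvalue m(A), and largest eigenvalue M(A), then χ(G) ≥ (M(A) − m(A))/(−m(A)). -/
/-!
Split a vector `x` as `x = ∑ₐ xₐ` along the `c` colour classes. Since `A` vanishes on each colour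
class, `xₐᵀ A xₐ = 0`, so the vectors `x - c • xₐ` satisfy `∑ₐ (x - c xₐ)ᵀ A (x - c xₐ) = -c xᵀ A x`
and `∑ₐ ‖x - c xₐ‖² = c (c - 1) ‖x‖²`. Bounding each quadratic form below by `m ‖x - c xₐ‖²` gives
`xᵀ A x ≤ -(c - 1) m ‖x‖²`; hence every eigenvalue, and so `M`, is at most `-(c - 1) m`.
-/

open Matrix

namespace Matrix

variable {n : Type*} [Fintype n]

open scoped MatrixOrder ComplexOrder in
theorem IsHermitian.mul_dotProduct_le_dotProduct_mulVec {𝕜 : Type*} [RCLike 𝕜] [DecidableEq n]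
    {A : Matrix n n 𝕜} (hA : A.IsHermitian) {m : ℝ} (hm : ∀ i, m ≤ hA.eigenvalues i)
    (x : n → 𝕜) : (m : 𝕜) * (star x ⬝ᵥ x) ≤ star x ⬝ᵥ A *ᵥ x := by
  have hshift : algebraMap ℝ _ m ≤ A := by
    rw [algebraMap_le_iff_le_spectrum hA.isSelfAdjoint, hA.spectrum_real_eq_range_eigenvalues]
    rintro _ ⟨i, rfl⟩
    exact hm i
  have hpsd := (le_iff.mp hshift).dotProduct_mulVec_nonneg x
  rw [sub_mulVec, dotProduct_sub, sub_nonneg] at hpsd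
  simpa [algebraMap_eq_diagonal, mulVec_diagonal, dotProduct, Finset.mul_sum, mul_left_comm]
    using hpsd

theorem IsSymm.dotProduct_mulVec_comm {R : Type*} [CommSemiring R] {A : Matrix n n R}
    (hA : A.IsSymm) (x y : n → R) : y ⬝ᵥ A *ᵥ x = x ⬝ᵥ A *ᵥ y := by
  rw [dotProduct_mulVec, ← mulVec_transpose, hA.eq, dotProduct_comm]

theorem IsSymm.dotProduct_mulVec_sub_smul {R : Type*} [CommRing R] {A : Matrix n n R}
    (hA : A.IsSymm) (x y : n → R) (t : R) :
    (x - t • y) ⬝ᵥ A *ᵥ (x - t • y) =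
      x ⬝ᵥ A *ᵥ x - 2 * t * (x ⬝ᵥ A *ᵥ y) + t ^ 2 * (y ⬝ᵥ A *ᵥ y) := by
  simp only [mulVec_sub, mulVec_smul, dotProduct_sub, sub_dotProduct, dotProduct_smul,
    smul_dotProduct, smul_eq_mul, hA.dotProduct_mulVec_comm x y]
  ring

theorem IsSymm.sum_dotProduct_mulVec_sub_smul {R ι : Type*} [CommRing R] [Fintype ι]
    {A : Matrix n n R} (hA : A.IsSymm) {x : n → R} (p : ι → n → R) (hx : ∑ a, p a = x)
    (t : R) :
    ∑ a, (x - t • p a) ⬝ᵥ A *ᵥ (x - t • p a) =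
      (Fintype.card ι - 2 * t) * (x ⬝ᵥ A *ᵥ x) + t ^ 2 * ∑ a, p a ⬝ᵥ A *ᵥ p a := by
  have hcross : ∑ a, x ⬝ᵥ A *ᵥ p a = x ⬝ᵥ A *ᵥ x := by
    rw [← dotProduct_sum, ← mulVec_sum, hx]
  simp only [hA.dotProduct_mulVec_sub_smul, Finset.sum_add_distrib, Finset.sum_sub_distrib,
    ← Finset.mul_sum, hcross, Finset.sum_const, Finset.card_univ, nsmul_eq_mul]
  ring

section LinearOrderedField

variable {R : Type*} [Field R] [LinearOrder R] [IsStrictOrderedRing R]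

theorem IsSymm.dotProduct_mulVec_le_of_coloring {α : Type*} [Fintype α]
    {A : Matrix n n R} (hA : A.IsSymm) (C : n → α) (hC : ∀ i j, C i = C j → A i j = 0)
    {m : R} (hm : ∀ y, m * (y ⬝ᵥ y) ≤ y ⬝ᵥ A *ᵥ y) (x : n → R) :
    x ⬝ᵥ A *ᵥ x ≤ -((Fintype.card α : R) - 1) * m * (x ⬝ᵥ x) := by
  classical
  cases isEmpty_or_nonempty α with
  | inl hα =>
    have : IsEmpty n := C.isEmpty
    simp [dotProduct]
  | inr hα =>
  set t : R := (Fintype.card α : R)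
  let part : α → n → R := fun a i => if C i = a then x i else 0
  have hsum : ∑ a, part a = x := by
    ext i
    simp [part, Finset.sum_apply]
  have hpart_self : ∀ a, part a ⬝ᵥ A *ᵥ part a = 0 := fun a =>
    Finset.sum_eq_zero fun i _ => by
      by_cases hi : C i = a
      · refine mul_eq_zero_of_right _ (Finset.sum_eq_zero fun j _ => ?_)
        by_cases hj : C j = a
        · simp [hC i j (hi.trans hj.symm)]
        · simp [part, hj]
      · simp [part, hi]
  have hpart_norm : ∑ a, part a ⬝ᵥ part a = x ⬝ᵥ x := by
    conv_rhs => rw [← hsum, dotProduct_sum]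
    refine Finset.sum_congr rfl fun a _ => Finset.sum_congr rfl fun i _ => ?_
    by_cases hi : C i = a <;> simp [part, hi]
  have hnorm : ∑ a, (x - t • part a) ⬝ᵥ (x - t • part a) = t * (t - 1) * (x ⬝ᵥ x) := by
    have h := isSymm_one.sum_dotProduct_mulVec_sub_smul part hsum t
    simp only [one_mulVec, hpart_norm] at h
    rw [h]
    ring
  have hquad : ∑ a, (x - t • part a) ⬝ᵥ A *ᵥ (x - t • part a) = -t * (x ⬝ᵥ A *ᵥ x) := by
    rw [hA.sum_dotProduct_mulVec_sub_smul part hsum, Finset.sum_eq_zero fun a _ => hpart_self a]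
    ring
  have key := Finset.sum_le_sum fun a (_ : a ∈ Finset.univ) => hm (x - t • part a)
  rw [← Finset.mul_sum, hnorm, hquad] at key
  have ht : 0 < t := Nat.cast_pos.mpr Fintype.card_pos
  nlinarith

theorem le_of_mulVec_eq_smul_of_dotProduct_mulVec_le {A : Matrix n n R} {K μ : R}
    (hK : ∀ x, x ⬝ᵥ A *ᵥ x ≤ K * (x ⬝ᵥ x)) {v : n → R} (hv : v ≠ 0)
    (hAv : A *ᵥ v = μ • v) : μ ≤ K := by
  have hpos : 0 < v ⬝ᵥ v :=
    (Finset.sum_nonneg fun i _ => mul_self_nonneg (v i)).lt_of_ne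
      (Ne.symm (dotProduct_self_eq_zero.not.mpr hv))
  have h := hK v
  rw [hAv, dotProduct_smul, smul_eq_mul] at h
  exact le_of_mul_le_mul_right h hpos

end LinearOrderedField

end Matrix

theorem SimpleGraph.Coloring.adjMatrix_apply_eq_zero {V α R : Type*} {G : SimpleGraph V}
    [DecidableRel G.Adj] [Zero R] [One R] (C : G.Coloring α) {u v : V} (huv : C u = C v) :
    G.adjMatrix R u v = 0 := by
  rw [adjMatrix_apply, if_neg fun hadj => C.valid hadj huv]

theorem hoffman_chromatic_bound_general {V : Type*} [Fintype V] [DecidableEq V]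
    (G : SimpleGraph V) [DecidableRel G.Adj]
    (hH : (G.adjMatrix ℝ).IsHermitian) (m M : ℝ)
    (hm : IsGLB (Set.range hH.eigenvalues) m)
    (hM : IsLUB (Set.range hH.eigenvalues) M) :
    ∀ c : ℕ, G.Colorable c → (M - m) / (-m) ≤ (c : ℝ) := by
  rintro c ⟨C⟩
  have hquad : ∀ x : V → ℝ, m * (x ⬝ᵥ x) ≤ x ⬝ᵥ G.adjMatrix ℝ *ᵥ x := fun x => by
    simpa using hH.mul_dotProduct_le_dotProduct_mulVec (fun i => hm.1 ⟨i, rfl⟩) x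
  have hup : ∀ x : V → ℝ, x ⬝ᵥ G.adjMatrix ℝ *ᵥ x ≤ -((c : ℝ) - 1) * m * (x ⬝ᵥ x) := by
    simpa only [Fintype.card_fin] using G.isSymm_adjMatrix.dotProduct_mulVec_le_of_coloring C
      (fun _ _ => C.adjMatrix_apply_eq_zero) hquad
  have heig : ∀ i, hH.eigenvalues i ≤ -((c : ℝ) - 1) * m := fun i =>
    le_of_mulVec_eq_smul_of_dotProduct_mulVec_le hup
      ((WithLp.ofLp_eq_zero 2).ne.2 <| hH.eigenvectorBasis.orthonormal.ne_zero i)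
      (hH.mulVec_eigenvectorBasis i)
  have hMle : M ≤ -((c : ℝ) - 1) * m := hM.2 (by rintro _ ⟨i, rfl⟩; exact heig i)
  obtain ⟨_, v, rfl⟩ := hm.nonempty
  have hc : (1 : ℝ) ≤ c := by exact_mod_cast Fin.pos (C v)
  have hm0 : m ≤ 0 := by nlinarith [heig v, hm.1 ⟨v, rfl⟩]
  -- for `m = 0` the left-hand side is the junk value `(M - m) / 0 = 0`
  exact div_le_of_le_mul₀ (by linarith) (by linarith) (by linarith)

/-- Hoffman's bound for the chromatic number of a finite graph with at least one
edge: `χ(G) ≥ (M(A) - m(A)) / (-m(A))`. -/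
theorem hoffman_chromatic_bound {V : Type*} [Fintype V] [DecidableEq V]
    (G : SimpleGraph V) [DecidableRel G.Adj] (hE : G ≠ ⊥)
    (hH : (G.adjMatrix ℝ).IsHermitian) (m M : ℝ)
    (hm : IsGLB (Set.range hH.eigenvalues) m)
    (hM : IsLUB (Set.range hH.eigenvalues) M) :
    ∀ c : ℕ, G.Colorable c → (M - m) / (-m) ≤ (c : ℝ) :=
  hoffman_chromatic_bound_general G hH m M hm hM
end

section
/- Spectral bound for the independence ratio with a near-eigenvector: Let (V, μ) be a probability space and A a nonzero bounded self-adjoint operator on L²(V). Fix R ∈ ℝ and set ε = ‖A 1_V − R·1_V‖, where 1_V is the constant-one function. Let m(A) = inf{⟨Af,f⟩ : ‖f‖=1}. If I ⊆ V is a measurable set with μ(I) > 0 such that ⟨Af,f⟩ = 0 for all f ∈ L²(V) vanishing a.e. outside I, and if R − m(A) − ε > 0, then μ(I) ≤ (−m(A) + 2ε)/(R − m(A) − ε). -/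
/-!
Write `1_I = α • 1 + g` with `α = μ(I)`; then `g ⊥ 1` and `‖g‖² = α - α²`. Expanding the vanishing
form `⟪A 1_I, 1_I⟫` and using `A 1 = R • 1 + e` with `‖e‖ = ε` together with `⟪A g, g⟫ ≥ m ‖g‖²`
gives `0 ≥ α² (R - ε) - 2 α ε + m (α - α²)`, and dividing by `α > 0` gives the bound.
-/

open MeasureTheory RCLike
open scoped InnerProductSpace

section NearEigenvector

variable {𝕜 E : Type*} [RCLike 𝕜] [NormedAddCommGroup E] [InnerProductSpace 𝕜 E]

theorem ContinuousLinearMap.mul_norm_sq_le_reApplyInnerSelf {T : E →L[𝕜] E} {m : ℝ}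
    (hm : ∀ u, ‖u‖ = 1 → m ≤ T.reApplyInnerSelf u) (x : E) :
    m * ‖x‖ ^ 2 ≤ T.reApplyInnerSelf x := by
  rcases eq_or_ne x 0 with rfl | hx
  · simp [T.reApplyInnerSelf_apply]
  have hm_unit := hm _ (norm_smul_inv_norm (𝕜 := 𝕜) hx)
  rw [T.reApplyInnerSelf_smul, norm_inv, norm_ofReal, abs_norm, inv_pow,
    inv_mul_eq_div, le_div_iff₀ (by positivity)] at hm_unit
  exact hm_unit

theorem ContinuousLinearMap.re_inner_map_smul_add_self {T : E →L[𝕜] E}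
    (hT : (T : E →ₗ[𝕜] E).IsSymmetric) (a : ℝ) (u v : E) :
    re ⟪T ((a : 𝕜) • u + v), (a : 𝕜) • u + v⟫_𝕜 =
      a ^ 2 * re ⟪T u, u⟫_𝕜 + 2 * a * re ⟪T u, v⟫_𝕜 + re ⟪T v, v⟫_𝕜 := by
  have hvu : re ⟪T v, u⟫_𝕜 = re ⟪T u, v⟫_𝕜 := by
    rw [← T.coe_coe, hT, ← inner_conj_symm, conj_re]
  simp only [map_add, map_smul, inner_add_left, inner_add_right, inner_smul_left,
    inner_smul_right, conj_ofReal, re_ofReal_mul, hvu]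
  ring

theorem sub_norm_sub_smul_le_re_inner {u : E} (hu : ‖u‖ = 1) (R : ℝ) (w : E) :
    R - ‖w - (R : 𝕜) • u‖ ≤ re ⟪w, u⟫_𝕜 := by
  have hwu : ⟪w, u⟫_𝕜 = ⟪w - (R : 𝕜) • u, u⟫_𝕜 + R := by
    rw [inner_sub_left, inner_smul_left, inner_self_eq_norm_sq_to_K, hu, conj_ofReal]
    simp
  have := re_inner_le_norm (𝕜 := 𝕜) (-(w - (R : 𝕜) • u)) u
  rw [inner_neg_left, map_neg, norm_neg, hu, mul_one] at this
  rw [hwu, map_add, ofReal_re]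
  linarith

theorem neg_norm_sub_smul_mul_norm_le_re_inner {u v : E} (huv : ⟪u, v⟫_𝕜 = 0) (R : ℝ) (w : E) :
    -(‖w - (R : 𝕜) • u‖ * ‖v‖) ≤ re ⟪w, v⟫_𝕜 := by
  have hwv : ⟪w, v⟫_𝕜 = ⟪w - (R : 𝕜) • u, v⟫_𝕜 := by
    rw [inner_sub_left, inner_smul_left, huv, mul_zero, sub_zero]
  have := re_inner_le_norm (𝕜 := 𝕜) (-(w - (R : 𝕜) • u)) v
  rw [inner_neg_left, map_neg, norm_neg] at this
  rw [hwv]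
  linarith

theorem inner_sub_inner_smul_eq_zero {u : E} (hu : ‖u‖ = 1) (f : E) :
    ⟪u, f - ⟪u, f⟫_𝕜 • u⟫_𝕜 = 0 := by
  rw [inner_sub_right, inner_smul_right, inner_self_eq_norm_sq_to_K, hu]
  simp

theorem norm_sub_inner_smul_sq {u : E} (hu : ‖u‖ = 1) (f : E) :
    ‖f - ⟪u, f⟫_𝕜 • u‖ ^ 2 = ‖f‖ ^ 2 - ‖⟪u, f⟫_𝕜‖ ^ 2 := by
  rw [@norm_sub_sq 𝕜, inner_smul_right, ← inner_conj_symm u f, RCLike.conj_mul, norm_smul, hu,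
    norm_conj, ← ofReal_pow, ofReal_re, mul_one]
  ring

-- `u` stands for the constant function `1` and `f` for the indicator of an independent set.
theorem ContinuousLinearMap.mul_le_of_reApplyInnerSelf_eq_zero {T : E →L[𝕜] E}
    (hT : (T : E →ₗ[𝕜] E).IsSymmetric) {m : ℝ} (hm : ∀ u, ‖u‖ = 1 → m ≤ T.reApplyInnerSelf u)
    {u f : E} {a : ℝ} (hu : ‖u‖ = 1) (huf : ⟪u, f⟫_𝕜 = a) (hf : ‖f‖ ^ 2 = a) (ha : 0 < a)
    (hTf : T.reApplyInnerSelf f = 0) (R : ℝ) :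
    a * (R - m - ‖T u - (R : 𝕜) • u‖) ≤ -m + 2 * ‖T u - (R : 𝕜) • u‖ := by
  set g := f - ⟪u, f⟫_𝕜 • u
  have hg_orth : ⟪u, g⟫_𝕜 = 0 := inner_sub_inner_smul_eq_zero hu f
  have hg_norm : ‖g‖ ^ 2 = a - a ^ 2 := by
    rw [norm_sub_inner_smul_sq hu, huf, hf, norm_ofReal, sq_abs]
  have hg_le : ‖g‖ ≤ 1 := by nlinarith [norm_nonneg g, sq_nonneg (a - 1 / 2)]
  have hfg : f = (a : 𝕜) • u + g := by rw [← huf]; exact (add_sub_cancel _ _).symm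
  have hexpand := T.re_inner_map_smul_add_self hT a u g
  rw [← hfg] at hexpand
  have huu := sub_norm_sub_smul_le_re_inner (𝕜 := 𝕜) hu R (T u)
  have hug := neg_norm_sub_smul_mul_norm_le_re_inner hg_orth R (T u)
  have hgg := T.mul_norm_sq_le_reApplyInnerSelf hm g
  rw [hg_norm] at hgg
  rw [T.reApplyInnerSelf_apply] at hTf hgg
  refine le_of_mul_le_mul_left ?_ ha
  nlinarith [mul_le_mul_of_nonneg_left huu (sq_nonneg a), mul_le_mul_of_nonneg_left hug ha.le,
    mul_le_mul_of_nonneg_left hg_le (mul_nonneg ha.le (norm_nonneg (T u - (R : 𝕜) • u)))]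

end NearEigenvector

section IndicatorL2

variable {𝕜 V : Type*} [RCLike 𝕜] [MeasurableSpace V] {μ : Measure V}

theorem indicatorConstLp_univ_eq_of_ae_eq [IsFiniteMeasure μ] {c : 𝕜} {f : Lp 𝕜 2 μ}
    (hf : ∀ᵐ x ∂μ, f x = c) : indicatorConstLp 2 .univ (measure_ne_top μ _) c = f := by
  refine Lp.ext ((indicatorConstLp_coeFn).trans (hf.mono fun x hx => ?_))
  simp [hx]

theorem norm_indicatorConstLp_one_sq {s : Set V} (hs : MeasurableSet s) (hμs : μ s ≠ ⊤) :
    ‖indicatorConstLp 2 hs hμs (1 : 𝕜)‖ ^ 2 = μ.real s := by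
  rw [@norm_sq_eq_re_inner 𝕜, L2.inner_indicatorConstLp_one_indicatorConstLp_one, Set.inter_self,
    ofReal_re]

end IndicatorL2

theorem independence_ratio_bound_general {V : Type*} [MeasurableSpace V] (μ : Measure V)
    [IsProbabilityMeasure μ]
    (A : Lp ℂ 2 μ →L[ℂ] Lp ℂ 2 μ)
    (hsa : ∀ f g : Lp ℂ 2 μ, (inner ℂ (A f) g : ℂ) = inner ℂ f (A g))
    (one : Lp ℂ 2 μ) (hone : ∀ᵐ x ∂μ, one x = 1)
    (R m ε : ℝ) (hε : ε = ‖A one - (R : ℂ) • one‖)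
    (hm : IsGLB {r : ℝ | ∃ f : Lp ℂ 2 μ, ‖f‖ = 1 ∧ r = (inner ℂ (A f) f : ℂ).re} m)
    (I : Set V) (hIm : MeasurableSet I) (hIpos : 0 < μ I)
    (hind : ∀ f : Lp ℂ 2 μ, (∀ᵐ x ∂μ, x ∉ I → f x = 0) → (inner ℂ (A f) f : ℂ) = 0)
    (hden : 0 < R - m - ε) :
    (μ I).toReal ≤ (-m + 2 * ε) / (R - m - ε) := by
  have hone_eq := indicatorConstLp_univ_eq_of_ae_eq hone
  set f := indicatorConstLp 2 hIm (measure_ne_top μ I) (1 : ℂ)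
  have hone_norm : ‖one‖ = 1 := by
    rw [← pow_eq_one_iff_of_nonneg (norm_nonneg _) two_ne_zero, ← hone_eq,
      norm_indicatorConstLp_one_sq, probReal_univ]
  have hone_f : ⟪one, f⟫_ℂ = μ.real I := by
    rw [← hone_eq, L2.inner_indicatorConstLp_one_indicatorConstLp_one, Set.univ_inter]
    rfl
  have hAf : A.reApplyInnerSelf f = 0 := by
    rw [A.reApplyInnerSelf_apply, hind f indicatorConstLp_coeFn_notMem, map_zero]
  subst hε
  rw [le_div_iff₀ hden]
  exact A.mul_le_of_reApplyInnerSelf_eq_zero hsa (fun u hu => hm.1 ⟨u, hu, rfl⟩) hone_norm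
    hone_f (norm_indicatorConstLp_one_sq hIm _)
    (ENNReal.toReal_pos hIpos.ne' (measure_ne_top μ I)) hAf R

/-- Spectral bound for the independence ratio with a near-eigenvector
(Theorem 2.3 in the paper). -/
theorem independence_ratio_bound {V : Type*} [MeasurableSpace V] (μ : Measure V)
    [IsProbabilityMeasure μ]
    (A : Lp ℂ 2 μ →L[ℂ] Lp ℂ 2 μ) (hA0 : A ≠ 0)
    (hsa : ∀ f g : Lp ℂ 2 μ, (inner ℂ (A f) g : ℂ) = inner ℂ f (A g))
    (one : Lp ℂ 2 μ) (hone : ∀ᵐ x ∂μ, one x = 1)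
    (R m ε : ℝ) (hε : ε = ‖A one - (R : ℂ) • one‖)
    (hm : IsGLB {r : ℝ | ∃ f : Lp ℂ 2 μ, ‖f‖ = 1 ∧ r = (inner ℂ (A f) f : ℂ).re} m)
    (I : Set V) (hIm : MeasurableSet I) (hIpos : 0 < μ I)
    (hind : ∀ f : Lp ℂ 2 μ, (∀ᵐ x ∂μ, x ∉ I → f x = 0) → (inner ℂ (A f) f : ℂ) = 0)
    (hden : 0 < R - m - ε) :
    (μ I).toReal ≤ (-m + 2 * ε) / (R - m - ε) :=
  independence_ratio_bound_general μ A hsa one hone R m ε hε hm I hIm hIpos hind hden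
end

section
/- Hoffman-type bound for the chromatic number of an operator: let A be a nonzero bounded self-adjoint operator on L²(V) for a measure space (V, Σ, μ), with m(A) = inf{⟨Af,f⟩ : ‖f‖=1} and M(A) = sup{⟨Af,f⟩ : ‖f‖=1}. If V can be partitioned into k measurable sets C₁,...,Cₖ each independent for A (and each of positive measure without loss of generality), then k ≥ (M(A) − m(A))/(−m(A)). -/
/-!
Split a unit vector `f` along the colour classes, `f = ∑ fᵢ`. The pieces are orthogonal and
`⟪A fᵢ, fᵢ⟫ = 0` by independence, so summing `⟪A (fᵢ - fⱼ), fᵢ - fⱼ⟫ ≥ m ‖fᵢ - fⱼ‖²` over all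
ordered pairs gives `-2 ⟪A f, f⟫ ≥ 2 (k - 1) m`. Hence `M ≤ (k - 1) (-m)`, which is the bound
when `m < 0`; when `m ≥ 0` the left-hand side is nonpositive because `m ≤ M`.
-/

open MeasureTheory

open scoped InnerProductSpace ENNReal

section NumericalRange

variable {𝕜 E ι : Type*} [RCLike 𝕜] [NormedAddCommGroup E] [InnerProductSpace 𝕜 E]

open RCLike

theorem mul_norm_sq_le_re_inner_map_self {T : E →ₗ[𝕜] E} {m : ℝ}
    (hm : m ∈ lowerBounds {r : ℝ | ∃ f : E, ‖f‖ = 1 ∧ r = re ⟪T f, f⟫_𝕜}) (g : E) :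
    m * ‖g‖ ^ 2 ≤ re ⟪T g, g⟫_𝕜 := by
  rcases eq_or_ne g 0 with rfl | hg
  · simp
  have hg' : 0 < ‖g‖ := norm_pos_iff.2 hg
  have hunit : ‖((‖g‖⁻¹ : ℝ) : 𝕜) • g‖ = 1 := by
    rw [norm_smul, norm_ofReal, abs_inv, abs_norm, inv_mul_cancel₀ hg'.ne']
  have hscale : re ⟪T (((‖g‖⁻¹ : ℝ) : 𝕜) • g), ((‖g‖⁻¹ : ℝ) : 𝕜) • g⟫_𝕜
      = re ⟪T g, g⟫_𝕜 / ‖g‖ ^ 2 := by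
    rw [map_smul, inner_smul_left, inner_smul_right, conj_ofReal, ← mul_assoc,
      ← ofReal_mul, re_ofReal_mul]
    field_simp
  have := hm ⟨_, hunit, rfl⟩
  rwa [hscale, le_div_iff₀ (by positivity)] at this

variable [Fintype ι]

theorem sum_sum_re_inner_map_sub_sub (T : E →ₗ[𝕜] E) (x : ι → E) :
    ∑ i, ∑ j, re ⟪T (x i - x j), x i - x j⟫_𝕜
      = 2 * Fintype.card ι * ∑ i, re ⟪T (x i), x i⟫_𝕜 - 2 * re ⟪T (∑ i, x i), ∑ i, x i⟫_𝕜 := by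
  rw [map_sum, sum_inner]
  simp only [inner_sum, map_sub, inner_sub_left, inner_sub_right, map_sum, Finset.sum_sub_distrib,
    Finset.sum_const, Finset.card_univ, nsmul_eq_mul, ← Finset.mul_sum]
  rw [Finset.sum_comm (f := fun i j => re ⟪T (x j), x i⟫_𝕜)]
  ring

theorem sum_norm_sq_of_pairwise_inner_eq_zero {x : ι → E}
    (hx : Pairwise fun i j => ⟪x i, x j⟫_𝕜 = 0) :
    ∑ i, ‖x i‖ ^ 2 = ‖∑ i, x i‖ ^ 2 := by
  classical
  have hdiag : ∀ i, ∑ j, ⟪x i, x j⟫_𝕜 = ⟪x i, x i⟫_𝕜 := fun i =>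
    Finset.sum_eq_single_of_mem i (Finset.mem_univ i) fun j _ hji => hx hji.symm
  rw [← inner_self_eq_norm_sq (𝕜 := 𝕜), sum_inner, map_sum]
  simp only [inner_sum, hdiag, inner_self_eq_norm_sq]

theorem re_inner_map_sum_self_le {T : E →ₗ[𝕜] E} {m : ℝ}
    (hm : ∀ g, m * ‖g‖ ^ 2 ≤ re ⟪T g, g⟫_𝕜) {x : ι → E}
    (horth : Pairwise fun i j => ⟪x i, x j⟫_𝕜 = 0) (hind : ∀ i, ⟪T (x i), x i⟫_𝕜 = 0) :
    re ⟪T (∑ i, x i), ∑ i, x i⟫_𝕜 ≤ (Fintype.card ι - 1) * -m * ‖∑ i, x i‖ ^ 2 := by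
  have hform : ∑ i, ∑ j, re ⟪T (x i - x j), x i - x j⟫_𝕜
      = -2 * re ⟪T (∑ i, x i), ∑ i, x i⟫_𝕜 := by
    rw [sum_sum_re_inner_map_sub_sub]
    simp only [hind, map_zero, Finset.sum_const_zero]
    ring
  have hnorm : ∑ i, ∑ j, ‖x i - x j‖ ^ 2 = 2 * (Fintype.card ι - 1) * ‖∑ i, x i‖ ^ 2 := by
    have := sum_sum_re_inner_map_sub_sub (LinearMap.id : E →ₗ[𝕜] E) x
    simp only [LinearMap.id_apply, inner_self_eq_norm_sq,
      sum_norm_sq_of_pairwise_inner_eq_zero horth] at this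
    linear_combination this
  have hlow : m * ∑ i, ∑ j, ‖x i - x j‖ ^ 2 ≤ ∑ i, ∑ j, re ⟪T (x i - x j), x i - x j⟫_𝕜 := by
    simp only [Finset.mul_sum]
    exact Finset.sum_le_sum fun i _ => Finset.sum_le_sum fun j _ => hm _
  rw [hform, hnorm] at hlow
  linarith

end NumericalRange

namespace MeasureTheory.Lp

variable {α E : Type*} [MeasurableSpace α] {μ : Measure α} [NormedAddCommGroup E] {p : ℝ≥0∞}
  {s : Set α}

noncomputable def indicator (hs : MeasurableSet s) (f : Lp E p μ) : Lp E p μ :=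
  ((Lp.memLp f).indicator hs).toLp _

theorem coeFn_indicator (hs : MeasurableSet s) (f : Lp E p μ) :
    ⇑(indicator hs f) =ᵐ[μ] s.indicator f :=
  MemLp.coeFn_toLp _

theorem indicator_ae_eq_zero_of_notMem (hs : MeasurableSet s) (f : Lp E p μ) :
    ∀ᵐ x ∂μ, x ∉ s → indicator hs f x = 0 := by
  filter_upwards [coeFn_indicator hs f] with x hx hxs
  rw [hx, Set.indicator_of_notMem hxs]

theorem sum_indicator_of_existsUnique {ι : Type*} [Fintype ι] {C : ι → Set α}
    (hC : ∀ i, MeasurableSet (C i)) (hpart : ∀ x, ∃! i, x ∈ C i) (f : Lp E p μ) :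
    ∑ i, indicator (hC i) f = f := by
  have hcoe := ae_all_iff.2 fun i => coeFn_indicator (hC i) f
  ext1
  filter_upwards [coeFn_fun_finsetSum Finset.univ fun i => indicator (hC i) f, hcoe]
    with x hsum hpieces
  obtain ⟨i, hi, huniq⟩ := hpart x
  rw [hsum, Finset.sum_eq_single_of_mem i (Finset.mem_univ i), hpieces, Set.indicator_of_mem hi]
  intro j _ hji
  rw [hpieces, Set.indicator_of_notMem fun hj => hji (huniq j hj)]

end MeasureTheory.Lp

theorem MeasureTheory.L2.inner_indicator_eq_zero_of_disjoint {α 𝕜 E : Type*} [MeasurableSpace α]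
    {μ : Measure α} [RCLike 𝕜] [NormedAddCommGroup E] [InnerProductSpace 𝕜 E] {s t : Set α}
    (hs : MeasurableSet s) (ht : MeasurableSet t) (hst : Disjoint s t) (f g : Lp E 2 μ) :
    ⟪Lp.indicator hs f, Lp.indicator ht g⟫_𝕜 = 0 := by
  rw [L2.inner_def]
  refine integral_eq_zero_of_ae ?_
  filter_upwards [Lp.coeFn_indicator hs f, Lp.coeFn_indicator ht g] with x hf hg
  rw [hf, hg, Pi.zero_apply]
  by_cases hxs : x ∈ s
  · rw [Set.indicator_of_notMem (Set.disjoint_left.1 hst hxs), inner_zero_right]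
  · rw [Set.indicator_of_notMem hxs, inner_zero_left]

theorem hoffman_bound_operator_general {V : Type*} [MeasurableSpace V] (μ : Measure V)
    (A : Lp ℂ 2 μ →L[ℂ] Lp ℂ 2 μ)
    (m M : ℝ)
    (hm : IsGLB {r : ℝ | ∃ f : Lp ℂ 2 μ, ‖f‖ = 1 ∧ r = (inner ℂ (A f) f : ℂ).re} m)
    (hM : IsLUB {r : ℝ | ∃ f : Lp ℂ 2 μ, ‖f‖ = 1 ∧ r = (inner ℂ (A f) f : ℂ).re} M)
    (k : ℕ) (C : Fin k → Set V) (hCm : ∀ i, MeasurableSet (C i))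
    (hpart : ∀ x : V, ∃! i, x ∈ C i)
    (hind : ∀ i, ∀ f : Lp ℂ 2 μ, (∀ᵐ x ∂μ, x ∉ C i → f x = 0) →
      (inner ℂ (A f) f : ℂ) = 0) :
    (M - m) / (-m) ≤ (k : ℝ) := by
  have hlow := mul_norm_sq_le_re_inner_map_self (T := (A : Lp ℂ 2 μ →ₗ[ℂ] Lp ℂ 2 μ)) hm.1
  have hdisj : Pairwise fun i j => Disjoint (C i) (C j) := fun i j hij =>
    Set.disjoint_left.2 fun x hi hj => hij ((hpart x).unique hi hj)
  have hMle : M ≤ (k - 1) * -m := by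
    refine hM.2 ?_
    rintro _ ⟨f, hf, rfl⟩
    have := re_inner_map_sum_self_le hlow
      (fun i j hij => L2.inner_indicator_eq_zero_of_disjoint (hCm i) (hCm j) (hdisj hij) f f)
      (fun i => hind i _ (Lp.indicator_ae_eq_zero_of_notMem (hCm i) f))
    rwa [Lp.sum_indicator_of_existsUnique hCm hpart, hf, Fintype.card_fin, one_pow, mul_one]
      at this
  have hmM : m ≤ M := isGLB_le_isLUB hm hM hM.nonempty
  rcases lt_or_ge m 0 with hneg | hnonneg
  · rw [div_le_iff₀ (neg_pos.2 hneg)]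
    linarith
  · exact (div_nonpos_of_nonneg_of_nonpos (by linarith) (by linarith)).trans k.cast_nonneg

/-- Hoffman-type bound for the chromatic number of a nonzero bounded
self-adjoint operator on `L²(V)`: if `V` partitions into `k` measurable
independent sets, then `k ≥ (M(A) - m(A)) / (-m(A))`. -/
theorem hoffman_bound_operator {V : Type*} [MeasurableSpace V] (μ : Measure V)
    (A : Lp ℂ 2 μ →L[ℂ] Lp ℂ 2 μ) (hA0 : A ≠ 0)
    (hsa : ∀ f g : Lp ℂ 2 μ, (inner ℂ (A f) g : ℂ) = inner ℂ f (A g))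
    (m M : ℝ)
    (hm : IsGLB {r : ℝ | ∃ f : Lp ℂ 2 μ, ‖f‖ = 1 ∧ r = (inner ℂ (A f) f : ℂ).re} m)
    (hM : IsLUB {r : ℝ | ∃ f : Lp ℂ 2 μ, ‖f‖ = 1 ∧ r = (inner ℂ (A f) f : ℂ).re} M)
    (k : ℕ) (C : Fin k → Set V) (hCm : ∀ i, MeasurableSet (C i))
    (hCpos : ∀ i, 0 < μ (C i))
    (hpart : ∀ x : V, ∃! i, x ∈ C i)
    (hind : ∀ i, ∀ f : Lp ℂ 2 μ, (∀ᵐ x ∂μ, x ∉ C i → f x = 0) →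
      (inner ℂ (A f) f : ℂ) = 0) :
    (M - m) / (-m) ≤ (k : ℝ) :=
  hoffman_bound_operator_general μ A m M hm hM k C hCm hpart hind
end

section
/- Spectral bound for the fractional chromatic number of an operator: let (V, μ) be a probability space and A a nonzero bounded self-adjoint operator on L²(V). Suppose λ₁,...,λₖ ≥ 0 and C₁,...,Cₖ are measurable sets independent for A such that λ₁·1_{C₁} + ... + λₖ·1_{Cₖ} = 1_V (as L² functions). Then λ₁ + ... + λₖ ≥ (⟨A 1_V, 1_V⟩ − m(A))/(−m(A)), provided m(A) < 0. -/
/-!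
Write `1 = ∑ λᵢ gᵢ` with `gᵢ = 1_{Cᵢ}` and put `s = ∑ λᵢ`. Testing `⟨A f, f⟩ ≥ m ‖f‖²` on the
deviations `f = s gᵢ - 1` and averaging with the weights `λᵢ`, the terms `⟨A gᵢ, gᵢ⟩ = 0` drop
out and the left side averages to `-s ⟨A 1, 1⟩`, while `∑ λᵢ ‖s gᵢ - 1‖² = s² - s` because
`∑ λᵢ μ(Cᵢ) = 1`. Dividing `m (s² - s) ≤ -s ⟨A 1, 1⟩` by `s > 0` gives the bound.
-/

open MeasureTheory RCLike

section QuadraticForm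

variable {𝕜 E : Type*} [RCLike 𝕜] [NormedAddCommGroup E] [InnerProductSpace 𝕜 E]

local notation "⟪" x ", " y "⟫" => inner 𝕜 x y

namespace ContinuousLinearMap

theorem mul_norm_sq_le_re_inner_apply_self (A : E →L[𝕜] E) {m : ℝ}
    (hm : m ∈ lowerBounds {r : ℝ | ∃ f : E, ‖f‖ = 1 ∧ r = re ⟪A f, f⟫}) (f : E) :
    m * ‖f‖ ^ 2 ≤ re ⟪A f, f⟫ := by
  rcases eq_or_ne f 0 with rfl | hf
  · simp
  obtain ⟨u, hu, hfu⟩ : A.rayleighQuotient f ∈ A.rayleighQuotient '' Metric.sphere 0 1 := by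
    rw [← A.image_rayleigh_eq_image_rayleigh_sphere one_pos]
    exact ⟨f, hf, rfl⟩
  rw [mem_sphere_zero_iff_norm] at hu
  have hmf : m ≤ A.rayleighQuotient f := by
    rw [← hfu, rayleighQuotient, reApplyInnerSelf_apply, hu, one_pow, div_one]
    exact hm ⟨u, hu, rfl⟩
  rwa [rayleighQuotient, le_div_iff₀ (by positivity)] at hmf

theorem sum_mul_inner_apply_deviation {ι : Type*} [Fintype ι] (T : E →L[𝕜] E) (lam : ι → ℝ)
    {t : ℝ} (ht : ∑ i, lam i = t) (g : ι → E) {u : E} (hu : ∑ i, (lam i : 𝕜) • g i = u) :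
    ∑ i, (lam i : 𝕜) * ⟪T ((t : 𝕜) • g i - u), (t : 𝕜) • g i - u⟫ =
      (t : 𝕜) ^ 2 * ∑ i, (lam i : 𝕜) * ⟪T (g i), g i⟫ - (t : 𝕜) * ⟪T u, u⟫ := by
  have hleft : ∑ i, (lam i : 𝕜) * ⟪T (g i), u⟫ = ⟪T u, u⟫ := by
    simp only [← hu, map_sum, map_smul, sum_inner, inner_smul_left, conj_ofReal]
  have hright : ∑ i, (lam i : 𝕜) * ⟪T u, g i⟫ = ⟪T u, u⟫ := by
    simp only [← hu, inner_sum, inner_smul_right]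
  have hexpand : ∀ i, ⟪T ((t : 𝕜) • g i - u), (t : 𝕜) • g i - u⟫ =
      (t : 𝕜) ^ 2 * ⟪T (g i), g i⟫ - t * ⟪T (g i), u⟫ - t * ⟪T u, g i⟫ + ⟪T u, u⟫ := by
    intro i
    simp only [map_sub, map_smul, inner_sub_left, inner_sub_right, inner_smul_left,
      inner_smul_right, conj_ofReal]
    ring
  have hsum : ∑ i, (lam i : 𝕜) * ⟪T ((t : 𝕜) • g i - u), (t : 𝕜) • g i - u⟫ =
      (t : 𝕜) ^ 2 * ∑ i, (lam i : 𝕜) * ⟪T (g i), g i⟫ - t * ∑ i, (lam i : 𝕜) * ⟪T (g i), u⟫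
        - t * ∑ i, (lam i : 𝕜) * ⟪T u, g i⟫ + (∑ i, (lam i : 𝕜)) * ⟪T u, u⟫ := by
    simp only [hexpand, Finset.mul_sum, Finset.sum_mul, ← Finset.sum_sub_distrib,
      ← Finset.sum_add_distrib]
    exact Finset.sum_congr rfl fun i _ => by ring
  rw [hsum, hleft, hright, ← ofReal_sum, ht]
  ring

theorem re_inner_apply_self_le_mul_one_sub_sum {ι : Type*} [Fintype ι] (A : E →L[𝕜] E) {m : ℝ}
    (hm : ∀ f, m * ‖f‖ ^ 2 ≤ re ⟪A f, f⟫) {lam : ι → ℝ} (hlam : ∀ i, 0 ≤ lam i) {g : ι → E}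
    (hg : ∀ i, ⟪A (g i), g i⟫ = 0) {u : E} (hu : ∑ i, (lam i : 𝕜) • g i = u)
    (hnorm : ∑ i, lam i * ‖g i‖ ^ 2 = ‖u‖ ^ 2) :
    re ⟪A u, u⟫ ≤ m * ‖u‖ ^ 2 * (1 - ∑ i, lam i) := by
  set t := ∑ i, lam i with ht
  rcases (Finset.sum_nonneg fun i _ => hlam i : 0 ≤ t).eq_or_lt with ht0 | ht0
  · have hlam0 : ∀ i, lam i = 0 := by
      simpa using (Finset.sum_eq_zero_iff_of_nonneg fun i _ => hlam i).1 ht0.symm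
    simp [← hu, hlam0]
  have hdev (T : E →L[𝕜] E) := congrArg re (T.sum_mul_inner_apply_deviation lam ht.symm g hu)
  have hnorms : ∑ i, lam i * ‖(t : 𝕜) • g i - u‖ ^ 2 = t * (t - 1) * ‖u‖ ^ 2 := by
    have := hdev (ContinuousLinearMap.id 𝕜 E)
    simp only [id_apply, map_sum, map_sub, re_ofReal_mul, ← ofReal_pow,
      inner_self_eq_norm_sq] at this
    rw [this, hnorm]
    ring
  have hquad :
      ∑ i, lam i * re ⟪A ((t : 𝕜) • g i - u), (t : 𝕜) • g i - u⟫ = -t * re ⟪A u, u⟫ := by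
    simpa [hg, map_sum, re_ofReal_mul] using hdev A
  have hineq : t * (m * (t - 1) * ‖u‖ ^ 2) ≤ t * -re ⟪A u, u⟫ := by
    calc t * (m * (t - 1) * ‖u‖ ^ 2) = ∑ i, lam i * (m * ‖(t : 𝕜) • g i - u‖ ^ 2) := by
          simp_rw [mul_left_comm (lam _) m, ← Finset.mul_sum, hnorms]
          ring
      _ ≤ ∑ i, lam i * re ⟪A ((t : 𝕜) • g i - u), (t : 𝕜) • g i - u⟫ :=
          Finset.sum_le_sum fun i _ => mul_le_mul_of_nonneg_left (hm _) (hlam i)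
      _ = t * -re ⟪A u, u⟫ := by rw [hquad, neg_mul, mul_neg]
  linarith [le_of_mul_le_mul_left hineq ht0]

end ContinuousLinearMap

end QuadraticForm

section IndicatorLp

variable {V : Type*} [MeasurableSpace V] {μ : Measure V}

theorem norm_indicatorConstLp_two_sq {E : Type*} [NormedAddCommGroup E] {s : Set V}
    (hs : MeasurableSet s) (hμs : μ s ≠ ⊤) (c : E) :
    ‖indicatorConstLp 2 hs hμs c‖ ^ 2 = ‖c‖ ^ 2 * μ.real s := by
  rw [norm_indicatorConstLp two_ne_zero ENNReal.ofNat_ne_top, mul_pow, ENNReal.toReal_ofNat,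
    ← Real.sqrt_eq_rpow, Real.sq_sqrt measureReal_nonneg]

theorem sum_mul_measureReal_eq_of_ae_sum_indicator [IsFiniteMeasure μ] {ι : Type*} [Fintype ι]
    {lam : ι → ℝ} {C : ι → Set V} (hC : ∀ i, MeasurableSet (C i))
    (hsum : ∀ᵐ x ∂μ, ∑ i, lam i * (C i).indicator (fun _ => (1 : ℝ)) x = 1) :
    ∑ i, lam i * μ.real (C i) = μ.real Set.univ := by
  have hint := integral_congr_ae hsum
  rw [integral_finsetSum _ fun i _ => ((integrable_const 1).indicator (hC i)).const_mul _,
    integral_const, smul_eq_mul, mul_one] at hint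
  simpa [integral_const_mul, integral_indicator_const _ (hC _)] using hint

theorem sum_smul_indicatorConstLp_eq {𝕜 : Type*} [RCLike 𝕜] {p : ENNReal} {ι : Type*}
    [Fintype ι] (lam : ι → ℝ) {C : ι → Set V} (hC : ∀ i, MeasurableSet (C i))
    (hμC : ∀ i, μ (C i) ≠ ⊤) {f : Lp 𝕜 p μ}
    (hf : ∀ᵐ x ∂μ, f x = ((∑ i, lam i * (C i).indicator (fun _ => (1 : ℝ)) x : ℝ) : 𝕜)) :
    ∑ i, (lam i : 𝕜) • indicatorConstLp p (hC i) (hμC i) (1 : 𝕜) = f := by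
  refine Lp.ext ?_
  have hterms : ∀ᵐ x ∂μ, ∀ i, ((lam i : 𝕜) • indicatorConstLp p (hC i) (hμC i) (1 : 𝕜)) x =
      ((lam i * (C i).indicator (fun _ => (1 : ℝ)) x : ℝ) : 𝕜) := by
    refine ae_all_iff.2 fun i => ?_
    filter_upwards [Lp.coeFn_smul (lam i : 𝕜) (indicatorConstLp p (hC i) (hμC i) (1 : 𝕜)),
      indicatorConstLp_coeFn (p := p) (hs := hC i) (hμs := hμC i) (c := (1 : 𝕜))]
      with x hsmul hind
    rw [hsmul, Pi.smul_apply, hind, smul_eq_mul, ofReal_mul]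
    by_cases hx : x ∈ C i <;> simp [hx]
  filter_upwards [Lp.coeFn_fun_finsetSum Finset.univ fun i =>
    (lam i : 𝕜) • indicatorConstLp p (hC i) (hμC i) (1 : 𝕜), hterms, hf] with x hsum hterm hfx
  rw [hsum, hfx, ofReal_sum]
  exact Finset.sum_congr rfl fun i _ => hterm i

end IndicatorLp

theorem fractional_chromatic_bound_general {V : Type*} [MeasurableSpace V] (μ : Measure V)
    [IsProbabilityMeasure μ]
    (A : Lp ℂ 2 μ →L[ℂ] Lp ℂ 2 μ)
    (one : Lp ℂ 2 μ) (hone : ∀ᵐ x ∂μ, one x = 1)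
    (m : ℝ)
    (hm : IsGLB {r : ℝ | ∃ f : Lp ℂ 2 μ, ‖f‖ = 1 ∧ r = (inner ℂ (A f) f : ℂ).re} m)
    (hmneg : m < 0)
    (k : ℕ) (lam : Fin k → ℝ) (hlam : ∀ i, 0 ≤ lam i)
    (C : Fin k → Set V) (hCm : ∀ i, MeasurableSet (C i))
    (hind : ∀ i, ∀ f : Lp ℂ 2 μ, (∀ᵐ x ∂μ, x ∉ C i → f x = 0) →
      (inner ℂ (A f) f : ℂ) = 0)
    (hsum : ∀ᵐ x ∂μ, ∑ i, lam i * Set.indicator (C i) (fun _ => (1 : ℝ)) x = 1) :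
    ((inner ℂ (A one) one : ℂ).re - m) / (-m) ≤ ∑ i, lam i := by
  set g : Fin k → Lp ℂ 2 μ := fun i => indicatorConstLp 2 (hCm i) (measure_ne_top μ (C i)) 1
  have hg : ∑ i, (lam i : ℂ) • g i = one :=
    sum_smul_indicatorConstLp_eq lam hCm _ <| by
      filter_upwards [hone, hsum] with x h1 h2
      simp [h1, h2]
  have hone_norm : ‖one‖ = 1 := by
    rw [show one = Lp.const 2 μ (1 : ℂ) from
      Lp.ext (Filter.EventuallyEq.trans hone (Lp.coeFn_const 2 μ (1 : ℂ)).symm)]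
    simp [Lp.norm_const]
  have hnorm : ∑ i, lam i * ‖g i‖ ^ 2 = ‖one‖ ^ 2 := by
    simp only [g, norm_indicatorConstLp_two_sq, norm_one, one_pow, one_mul,
      sum_mul_measureReal_eq_of_ae_sum_indicator hCm hsum, probReal_univ, hone_norm]
  have hbound := A.re_inner_apply_self_le_mul_one_sub_sum
    (A.mul_norm_sq_le_re_inner_apply_self hm.1) hlam
    (fun i => hind i _ indicatorConstLp_coeFn_notMem) hg hnorm
  rw [hone_norm, one_pow, mul_one, RCLike.re_to_complex] at hbound
  rw [div_le_iff₀ (neg_pos.2 hmneg)]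
  linarith

/-- Spectral bound for the fractional chromatic number of an operator:
`λ₁ + ⋯ + λₖ ≥ (⟨A1, 1⟩ - m(A)) / (-m(A))`. -/
theorem fractional_chromatic_bound {V : Type*} [MeasurableSpace V] (μ : Measure V)
    [IsProbabilityMeasure μ]
    (A : Lp ℂ 2 μ →L[ℂ] Lp ℂ 2 μ) (hA0 : A ≠ 0)
    (hsa : ∀ f g : Lp ℂ 2 μ, (inner ℂ (A f) g : ℂ) = inner ℂ f (A g))
    (one : Lp ℂ 2 μ) (hone : ∀ᵐ x ∂μ, one x = 1)
    (m : ℝ)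
    (hm : IsGLB {r : ℝ | ∃ f : Lp ℂ 2 μ, ‖f‖ = 1 ∧ r = (inner ℂ (A f) f : ℂ).re} m)
    (hmneg : m < 0)
    (k : ℕ) (lam : Fin k → ℝ) (hlam : ∀ i, 0 ≤ lam i)
    (C : Fin k → Set V) (hCm : ∀ i, MeasurableSet (C i))
    (hind : ∀ i, ∀ f : Lp ℂ 2 μ, (∀ᵐ x ∂μ, x ∉ C i → f x = 0) →
      (inner ℂ (A f) f : ℂ) = 0)
    (hsum : ∀ᵐ x ∂μ, ∑ i, lam i * Set.indicator (C i) (fun _ => (1 : ℝ)) x = 1) :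
    ((inner ℂ (A one) one : ℂ).re - m) / (-m) ≤ ∑ i, lam i :=
  fractional_chromatic_bound_general μ A one hone m hm hmneg k lam hlam C hCm hind hsum
end

section
/- Feasible solutions of the generalized theta program bound the measure of independent sets: let (V, μ) be a probability space, λ ∈ ℝ, and Z a bounded self-adjoint operator on L²(V) such that λ·I + Z − J is a positive operator, where J f = ⟨f, 1_V⟩·1_V. If I ⊆ V is measurable with μ(I) > 0 and ⟨Z 1_I, 1_I⟩ = 0, then μ(I) ≤ λ. -/
open MeasureTheory

/-!
Test the positivity of `λ·I + Z - J` against `1_I`: since `⟨Z 1_I, 1_I⟩ = 0` and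
`⟨1_I, 1_I⟩ = ⟨1_I, 1_V⟩ = μ(I)`, this gives `λ μ(I) - μ(I)² ≥ 0`, and dividing by `μ(I) > 0`
yields `μ(I) ≤ λ`.
-/

section InnerProductSpace

variable {E : Type*} [NormedAddCommGroup E] [InnerProductSpace ℂ E]

theorem le_of_re_inner_sub_inner_smul_nonneg {v e w : E} {lam m : ℝ} (hm : 0 < m)
    (hve : inner ℂ v e = (m : ℂ)) (hvv : inner ℂ v v = (m : ℂ)) (hwv : inner ℂ w v = 0)
    (h : 0 ≤ (inner ℂ ((lam : ℂ) • v + w - inner ℂ v e • e) v).re) : m ≤ lam := by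
  have hev : inner ℂ e v = (m : ℂ) := by rw [← inner_conj_symm, hve, Complex.conj_ofReal]
  have hre : (inner ℂ ((lam : ℂ) • v + w - inner ℂ v e • e) v).re = m * (lam - m) := by
    rw [inner_sub_left, inner_add_left, inner_smul_left, inner_smul_left, hwv, hve, hvv, hev]
    simp only [Complex.conj_ofReal, add_zero, Complex.sub_re, Complex.mul_re, Complex.ofReal_re,
      Complex.ofReal_im, mul_zero, sub_zero]
    ring
  rw [hre] at h
  nlinarith

end InnerProductSpace

theorem MeasureTheory.Lp.eq_indicatorConstLp_of_ae_eq {α E : Type*} [MeasurableSpace α]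
    [NormedAddCommGroup E] {p : ENNReal} {μ : Measure α} {s : Set α} (hs : MeasurableSet s)
    (hμs : μ s ≠ ⊤) {c : E} {f : Lp E p μ} (hf : f =ᵐ[μ] s.indicator fun _ => c) :
    f = indicatorConstLp p hs hμs c :=
  Lp.ext (hf.trans indicatorConstLp_coeFn.symm)

theorem theta_feasible_bounds_independent_general {V : Type*} [MeasurableSpace V]
    (μ : Measure V) [IsProbabilityMeasure μ]
    (Z : Lp ℂ 2 μ →L[ℂ] Lp ℂ 2 μ)
    (lam : ℝ) (one : Lp ℂ 2 μ) (hone : ∀ᵐ x ∂μ, one x = 1)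
    (hpos : ∀ f : Lp ℂ 2 μ,
      0 ≤ ((inner ℂ ((lam : ℂ) • f + Z f - (inner ℂ f one : ℂ) • one) f : ℂ)).re)
    (I : Set V) (hIm : MeasurableSet I) (hIpos : 0 < μ I)
    (indI : Lp ℂ 2 μ)
    (hindI : ∀ᵐ x ∂μ, indI x = Set.indicator I (fun _ => (1 : ℂ)) x)
    (hZI : (inner ℂ (Z indI) indI : ℂ) = 0) :
    (μ I).toReal ≤ lam := by
  obtain rfl : indI = indicatorConstLp 2 hIm (measure_ne_top μ I) (1 : ℂ) :=
    Lp.eq_indicatorConstLp_of_ae_eq hIm _ hindI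
  obtain rfl : one = indicatorConstLp 2 MeasurableSet.univ (measure_ne_top μ _) (1 : ℂ) :=
    Lp.eq_indicatorConstLp_of_ae_eq MeasurableSet.univ _ (hone.mono fun x hx => by simp [hx])
  refine le_of_re_inner_sub_inner_smul_nonneg (ENNReal.toReal_pos hIpos.ne' (measure_ne_top μ I))
    ?_ ?_ hZI (hpos _)
  · rw [L2.inner_indicatorConstLp_one_indicatorConstLp_one, Set.inter_univ]; rfl
  · rw [L2.inner_indicatorConstLp_one_indicatorConstLp_one, Set.inter_self]; rfl

/-- Feasible solutions of the generalized theta program bound the measure of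
independent sets: if `λ·I + Z - J ⪰ 0` and `I` is independent for `Z` with
`μ(I) > 0`, then `μ(I) ≤ λ`. -/
theorem theta_feasible_bounds_independent {V : Type*} [MeasurableSpace V]
    (μ : Measure V) [IsProbabilityMeasure μ]
    (Z : Lp ℂ 2 μ →L[ℂ] Lp ℂ 2 μ)
    (hsa : ∀ f g : Lp ℂ 2 μ, (inner ℂ (Z f) g : ℂ) = inner ℂ f (Z g))
    (lam : ℝ) (one : Lp ℂ 2 μ) (hone : ∀ᵐ x ∂μ, one x = 1)
    (hpos : ∀ f : Lp ℂ 2 μ,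
      0 ≤ ((inner ℂ ((lam : ℂ) • f + Z f - (inner ℂ f one : ℂ) • one) f : ℂ)).re)
    (I : Set V) (hIm : MeasurableSet I) (hIpos : 0 < μ I)
    (indI : Lp ℂ 2 μ)
    (hindI : ∀ᵐ x ∂μ, indI x = Set.indicator I (fun _ => (1 : ℂ)) x)
    (hZI : (inner ℂ (Z indI) indI : ℂ) = 0) :
    (μ I).toReal ≤ lam :=
  theta_feasible_bounds_independent_general μ Z lam one hone hpos I hIm hIpos indI hindI hZI
end

section
/- Construction of a feasible theta solution from an operator: let (V, μ) be a probability space and A a bounded self-adjoint operator on L²(V) with A 1_V = M₁·1_V for some M₁ ∈ ℝ, with m(A) = −1 (i.e., inf over unit vectors of ⟨Af,f⟩ equals −1) and M₁ + 1 > 0. Set λ = 1/(M₁ + 1) and Z = λ·A. Then λ·I + Z − J is a positive operator, where J f = ⟨f, 1_V⟩·1_V. -/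
/-!
Write `T = I + A`, so that `m(A) = -1` makes `T` positive and `T 1 = (M₁ + 1) 1`.
Splitting `f = c 1 + g` with `c = ⟪1, f⟫` and `g ⊥ 1`, symmetry of `T` kills the cross terms, so
`re ⟪T f, f⟫ = (M₁ + 1) |c|² + re ⟪T g, g⟫ ≥ (M₁ + 1) |c|²`.
Dividing by `M₁ + 1` gives `λ re ⟪T f, f⟫ ≥ |c|² ≥ re (c²) = re ⟪J f, f⟫`.
-/

open MeasureTheory RCLike

theorem MeasureTheory.Lp.norm_eq_of_ae_eq_const {α E : Type*} [MeasurableSpace α]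
    [NormedAddCommGroup E] {μ : Measure α} [IsProbabilityMeasure μ] {p : ENNReal} (hp : p ≠ 0)
    {f : Lp E p μ} {c : E} (hf : f =ᵐ[μ] Function.const α c) : ‖f‖ = ‖c‖ := by
  rw [Lp.ext (hf.trans (Lp.coeFn_const p μ c).symm), Lp.norm_const p μ c hp]
  simp

section

variable {𝕜 E : Type*} [RCLike 𝕜] [NormedAddCommGroup E] [InnerProductSpace 𝕜 E]

theorem ContinuousLinearMap.mul_norm_sq_le_re_inner_of_mem_lowerBounds (T : E →L[𝕜] E) {r : ℝ}
    (hr : r ∈ lowerBounds {s : ℝ | ∃ f : E, ‖f‖ = 1 ∧ s = re (inner 𝕜 (T f) f)}) (x : E) :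
    r * ‖x‖ ^ 2 ≤ re (inner 𝕜 (T x) x) := by
  rcases eq_or_ne x 0 with rfl | hx
  · simp
  have hx' : 0 < ‖x‖ := norm_pos_iff.mpr hx
  have hunit : ‖((‖x‖⁻¹ : ℝ) : 𝕜) • x‖ = 1 := by
    rw [norm_smul, norm_algebraMap', norm_inv, norm_norm, inv_mul_cancel₀ hx'.ne']
  have hle := hr ⟨_, hunit, rfl⟩
  rw [← T.reApplyInnerSelf_apply, T.reApplyInnerSelf_smul, norm_algebraMap', norm_inv,
    norm_norm, T.reApplyInnerSelf_apply] at hle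
  rwa [inv_pow, ← div_eq_inv_mul, le_div_iff₀ (by positivity)] at hle

theorem LinearMap.IsSymmetric.re_inner_smul_add_of_inner_eq_zero {T : E →ₗ[𝕜] E}
    (hT : T.IsSymmetric) {e : E} {a : ℝ} (hTe : T e = (a : 𝕜) • e) (c : 𝕜) {g : E}
    (hg : inner 𝕜 e g = 0) :
    re (inner 𝕜 (T (c • e + g)) (c • e + g)) = a * ‖c‖ ^ 2 * ‖e‖ ^ 2 + re (inner 𝕜 (T g) g) := by
  have hTge : inner 𝕜 (T g) e = 0 := by
    rw [hT, hTe, inner_smul_right, ← inner_conj_symm, hg, map_zero, mul_zero]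
  simp only [map_add, map_smul, hTe, smul_smul, inner_add_left, inner_add_right,
    inner_smul_left, inner_smul_right, hg, hTge, mul_zero, zero_add, add_zero,
    inner_self_eq_norm_sq_to_K, map_mul, conj_ofReal]
  have hcoef : c * (starRingEnd 𝕜 c * a * ‖e‖ ^ 2) = ((a * ‖c‖ ^ 2 * ‖e‖ ^ 2 : ℝ) : 𝕜) := by
    rw [← mul_assoc, ← mul_assoc, mul_conj]
    push_cast
    ring
  rw [hcoef, ofReal_re]

theorem LinearMap.IsPositive.mul_norm_inner_sq_le {T : E →ₗ[𝕜] E} (hT : T.IsPositive)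
    {e : E} (he : ‖e‖ = 1) {a : ℝ} (hTe : T e = (a : 𝕜) • e) (f : E) :
    a * ‖inner 𝕜 e f‖ ^ 2 ≤ re (inner 𝕜 (T f) f) := by
  set c := inner 𝕜 e f
  have hg : inner 𝕜 e (f - c • e) = 0 := by
    rw [inner_sub_right, inner_smul_right, inner_self_eq_norm_sq_to_K, he]
    simp [c]
  have hf : f = c • e + (f - c • e) := (add_sub_cancel _ _).symm
  rw [hf, hT.isSymmetric.re_inner_smul_add_of_inner_eq_zero hTe c hg, he, one_pow, mul_one]
  exact le_add_of_nonneg_right (hT.re_inner_nonneg_left _)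

end

/-- Construction of a feasible theta solution from an operator: if `A 1 = M₁·1`,
`m(A) = -1` and `M₁ + 1 > 0`, then with `λ = 1/(M₁+1)` and `Z = λ·A` the
operator `λ·I + Z - J` is positive. -/
theorem theta_feasible_from_operator {V : Type*} [MeasurableSpace V]
    (μ : Measure V) [IsProbabilityMeasure μ]
    (A : Lp ℂ 2 μ →L[ℂ] Lp ℂ 2 μ)
    (hsa : ∀ f g : Lp ℂ 2 μ, (inner ℂ (A f) g : ℂ) = inner ℂ f (A g))
    (one : Lp ℂ 2 μ) (hone : ∀ᵐ x ∂μ, one x = 1)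
    (M₁ : ℝ) (heig : A one = (M₁ : ℂ) • one)
    (hm : IsGLB {r : ℝ | ∃ f : Lp ℂ 2 μ, ‖f‖ = 1 ∧ r = (inner ℂ (A f) f : ℂ).re}
      (-1 : ℝ))
    (hM₁ : 0 < M₁ + 1) :
    ∀ f : Lp ℂ 2 μ,
      0 ≤ ((inner ℂ (((1 / (M₁ + 1) : ℝ) : ℂ) • f + ((1 / (M₁ + 1) : ℝ) : ℂ) • A f
        - (inner ℂ f one : ℂ) • one) f : ℂ)).re := by
  intro f
  have hone_norm : ‖one‖ = 1 := by simpa using Lp.norm_eq_of_ae_eq_const two_ne_zero hone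
  set T : Lp ℂ 2 μ →ₗ[ℂ] Lp ℂ 2 μ := LinearMap.id + (A : Lp ℂ 2 μ →ₗ[ℂ] Lp ℂ 2 μ)
  have hT : T.IsPositive := by
    refine ⟨LinearMap.IsSymmetric.id.add hsa, fun x => ?_⟩
    have hAx := A.mul_norm_sq_le_re_inner_of_mem_lowerBounds hm.1 x
    rw [LinearMap.add_apply, inner_add_left, map_add, LinearMap.id_apply, inner_self_eq_norm_sq]
    exact neg_le_iff_add_nonneg'.mp (by simpa using hAx)
  have hTone : T one = ((M₁ + 1 : ℝ) : ℂ) • one := by simp [T, heig, add_smul, add_comm]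
  have hvec : ((1 / (M₁ + 1) : ℝ) : ℂ) • f + ((1 / (M₁ + 1) : ℝ) : ℂ) • A f
      - inner ℂ f one • one = ((1 / (M₁ + 1) : ℝ) : ℂ) • T f - inner ℂ f one • one := by
    simp [T, smul_add]
  rw [hvec, inner_sub_left, inner_smul_left, inner_smul_left, Complex.conj_ofReal,
    inner_conj_symm, Complex.sub_re, Complex.re_ofReal_mul, sub_nonneg]
  calc (inner ℂ one f * inner ℂ one f).re ≤ ‖inner ℂ one f‖ ^ 2 := by
        simpa [sq] using re_le_norm (inner ℂ one f * inner ℂ one f)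
    _ = 1 / (M₁ + 1) * ((M₁ + 1) * ‖inner ℂ one f‖ ^ 2) := by field_simp
    _ ≤ 1 / (M₁ + 1) * (inner ℂ (T f) f).re := by
        gcongr
        exact hT.mul_norm_inner_sq_le hone_norm hTone f
end
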